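/- Let G be a finite simple graph with vertex set V. For every vertex v: the sum over all neighbors a of v of n2c(v,a) · n2e(v,a) equals F4'(v) + 2·F7(v). -/
import Mathlib


open Finset
open scoped Classical

namespace FourProfiles

variable {V : Type*} [Fintype V] [DecidableEq V]

/-- Number of 3-element subsets of `V \ {v}` admitting a labeling `a, b, c` satisfying `P`. -/
noncomputable def cnt3 (v : V) (P : V → V → V → Prop) : ℕ :=
  (((Finset.univ : Finset V).powersetCard 3).filter
    (fun s => v ∉ s ∧ ∃ a ∈ s, ∃ b ∈ s, ∃ c ∈ s, s = {a, b, c} ∧ P a b c)).card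

variable (G : SimpleGraph V)

/-- Induced subgraph on `{v,a,b,c}` has exactly one edge, with `v` an endpoint. -/
noncomputable def F1 (v : V) : ℕ := cnt3 v fun a b c =>
  G.Adj v a ∧ ¬G.Adj v b ∧ ¬G.Adj v c ∧ ¬G.Adj a b ∧ ¬G.Adj a c ∧ ¬G.Adj b c

/-- Induced subgraph on `{v,a,b,c}` is a perfect matching (two disjoint edges). -/
noncomputable def F2 (v : V) : ℕ := cnt3 v fun a b c =>
  G.Adj v a ∧ G.Adj b c ∧ ¬G.Adj v b ∧ ¬G.Adj v c ∧ ¬G.Adj a b ∧ ¬G.Adj a c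

/-- Two-edge path plus isolated vertex, `v` an endpoint of the path. -/
noncomputable def F3 (v : V) : ℕ := cnt3 v fun a b c =>
  G.Adj v a ∧ G.Adj a b ∧ ¬G.Adj v b ∧ ¬G.Adj v c ∧ ¬G.Adj a c ∧ ¬G.Adj b c

/-- Two-edge path plus isolated vertex, `v` the middle vertex of the path. -/
noncomputable def F3' (v : V) : ℕ := cnt3 v fun a b c =>
  G.Adj v a ∧ G.Adj v b ∧ ¬G.Adj a b ∧ ¬G.Adj v c ∧ ¬G.Adj a c ∧ ¬G.Adj b c

/-- Path on four vertices, `v` an endpoint. -/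
noncomputable def F4 (v : V) : ℕ := cnt3 v fun a b c =>
  G.Adj v a ∧ G.Adj a b ∧ G.Adj b c ∧ ¬G.Adj v b ∧ ¬G.Adj v c ∧ ¬G.Adj a c

/-- Path on four vertices, `v` an internal (degree-2) vertex. -/
noncomputable def F4' (v : V) : ℕ := cnt3 v fun a b c =>
  G.Adj v a ∧ G.Adj v b ∧ G.Adj b c ∧ ¬G.Adj a b ∧ ¬G.Adj v c ∧ ¬G.Adj a c

/-- Triangle plus isolated vertex, `v` in the triangle. -/
noncomputable def F5 (v : V) : ℕ := cnt3 v fun a b c =>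
  G.Adj v a ∧ G.Adj v b ∧ G.Adj a b ∧ ¬G.Adj v c ∧ ¬G.Adj a c ∧ ¬G.Adj b c

/-- Star `K_{1,3}`, `v` a leaf. -/
noncomputable def F6 (v : V) : ℕ := cnt3 v fun a b c =>
  G.Adj v a ∧ G.Adj a b ∧ G.Adj a c ∧ ¬G.Adj v b ∧ ¬G.Adj v c ∧ ¬G.Adj b c

/-- Star `K_{1,3}`, `v` the center. -/
noncomputable def F6' (v : V) : ℕ := cnt3 v fun a b c =>
  G.Adj v a ∧ G.Adj v b ∧ G.Adj v c ∧ ¬G.Adj a b ∧ ¬G.Adj a c ∧ ¬G.Adj b c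

/-- 4-cycle. -/
noncomputable def F7 (v : V) : ℕ := cnt3 v fun a b c =>
  G.Adj v a ∧ G.Adj a b ∧ G.Adj b c ∧ G.Adj v c ∧ ¬G.Adj v b ∧ ¬G.Adj a c

/-- Paw (triangle with a pendant edge), `v` the pendant (degree-1) vertex. -/
noncomputable def F8 (v : V) : ℕ := cnt3 v fun a b c =>
  G.Adj v a ∧ G.Adj a b ∧ G.Adj a c ∧ G.Adj b c ∧ ¬G.Adj v b ∧ ¬G.Adj v c

/-- Paw, `v` the degree-3 vertex. -/
noncomputable def F8' (v : V) : ℕ := cnt3 v fun a b c =>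
  G.Adj v a ∧ G.Adj v b ∧ G.Adj a b ∧ G.Adj v c ∧ ¬G.Adj a c ∧ ¬G.Adj b c

/-- Paw, `v` one of the two degree-2 vertices. -/
noncomputable def F8'' (v : V) : ℕ := cnt3 v fun a b c =>
  G.Adj v a ∧ G.Adj v b ∧ G.Adj a b ∧ G.Adj a c ∧ ¬G.Adj v c ∧ ¬G.Adj b c

/-- Diamond (`K4` minus one edge), `v` one of the two degree-2 vertices. -/
noncomputable def F9 (v : V) : ℕ := cnt3 v fun a b c =>
  G.Adj v a ∧ G.Adj v b ∧ G.Adj a b ∧ G.Adj a c ∧ G.Adj b c ∧ ¬G.Adj v c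

/-- Diamond, `v` one of the two degree-3 vertices. -/
noncomputable def F9' (v : V) : ℕ := cnt3 v fun a b c =>
  G.Adj v a ∧ G.Adj v b ∧ G.Adj v c ∧ G.Adj a b ∧ G.Adj a c ∧ ¬G.Adj b c

/-- Complete graph `K4`. -/
noncomputable def F10 (v : V) : ℕ := cnt3 v fun a b c =>
  G.Adj v a ∧ G.Adj v b ∧ G.Adj v c ∧ G.Adj a b ∧ G.Adj a c ∧ G.Adj b c

/-- `|V \ (Γ(v) ∪ Γ(a))|`. -/
noncomputable def n1e (v a : V) : ℕ :=
  (Finset.univ.filter fun x => ¬G.Adj v x ∧ ¬G.Adj a x).card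

/-- `|Γ(v) \ (Γ(a) ∪ {a})|`. -/
noncomputable def n2c (v a : V) : ℕ :=
  (Finset.univ.filter fun x => G.Adj v x ∧ ¬G.Adj a x ∧ x ≠ a).card

/-- `|Γ(a) \ (Γ(v) ∪ {v})|`. -/
noncomputable def n2e (v a : V) : ℕ :=
  (Finset.univ.filter fun x => G.Adj a x ∧ ¬G.Adj v x ∧ x ≠ v).card

/-- `|Γ(v) ∩ Γ(a)|`. -/
noncomputable def n3 (v a : V) : ℕ :=
  (Finset.univ.filter fun x => G.Adj v x ∧ G.Adj a x).card

/-- Number of edges of `G` with neither endpoint in `Γ(v) ∪ {v}`. -/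
noncomputable def n1d (v : V) : ℕ :=
  (((Finset.univ : Finset V).powersetCard 2).filter
    (fun s => ∃ a ∈ s, ∃ b ∈ s, s = {a, b} ∧ G.Adj a b ∧
      ¬G.Adj v a ∧ ¬G.Adj v b ∧ a ≠ v ∧ b ≠ v)).card

/-- Number of triangles of `G` containing `a`. -/
noncomputable def tri (a : V) : ℕ :=
  (((Finset.univ : Finset V).powersetCard 2).filter
    (fun s => ∃ x ∈ s, ∃ y ∈ s, s = {x, y} ∧ G.Adj a x ∧ G.Adj a y ∧ G.Adj x y)).card

/-- Number of 2-element subsets `{x,y}` of `V \ {a}` inducing a two-edge path with `a`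
an endpoint. -/
noncomputable def twoPathEnd (a : V) : ℕ :=
  (((Finset.univ : Finset V).powersetCard 2).filter
    (fun s => a ∉ s ∧ ∃ x ∈ s, ∃ y ∈ s, s = {x, y} ∧ G.Adj a x ∧ G.Adj x y ∧ ¬G.Adj a y)).card

/-- Number of 2-element subsets `{b,c} ⊆ Γ(a)` with `b` adjacent to `c`, `b ∈ Γ(v)`,
`c ∈ Γ(v)`. -/
noncomputable def triIn (v a : V) : ℕ :=
  (((Finset.univ : Finset V).powersetCard 2).filter
    (fun s => ∃ b ∈ s, ∃ c ∈ s, s = {b, c} ∧ G.Adj a b ∧ G.Adj a c ∧ G.Adj b c ∧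
      G.Adj v b ∧ G.Adj v c)).card

/-- Number of 2-element subsets `{b,c} ⊆ Γ(a)` with `b` adjacent to `c`, `b ∉ Γ(v)`,
`c ∉ Γ(v)`. -/
noncomputable def triOut (v a : V) : ℕ :=
  (((Finset.univ : Finset V).powersetCard 2).filter
    (fun s => ∃ b ∈ s, ∃ c ∈ s, s = {b, c} ∧ G.Adj a b ∧ G.Adj a c ∧ G.Adj b c ∧
      ¬G.Adj v b ∧ ¬G.Adj v c)).card

private lemma card3_distinct {a b c : V} (h : ({a, b, c} : Finset V).card = 3) :
    a ≠ b ∧ a ≠ c ∧ b ≠ c := by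
  refine ⟨?_, ?_, ?_⟩ <;> rintro rfl
  · rw [Finset.insert_idem] at h
    have h2 := Finset.card_insert_le a ({c} : Finset V)
    rw [h] at h2; simp at h2
  · rw [Finset.insert_comm, Finset.pair_eq_singleton] at h
    have h2 := Finset.card_insert_le b ({a} : Finset V)
    rw [h] at h2; simp at h2
  · rw [Finset.pair_eq_singleton] at h
    have h2 := Finset.card_insert_le a ({b} : Finset V)
    rw [h] at h2; simp at h2

set_option maxHeartbeats 1000000 in
theorem statement8 [DecidableRel G.Adj] (v : V) :
    ∑ a ∈ G.neighborFinset v, n2c G v a * n2e G v a = F4' G v + 2 * F7 G v := by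
  classical
  set S : Finset ((_ : V) × V × V) :=
    (G.neighborFinset v).sigma (fun a =>
      (Finset.univ.filter fun x => G.Adj v x ∧ ¬G.Adj a x ∧ x ≠ a) ×ˢ
      (Finset.univ.filter fun x => G.Adj a x ∧ ¬G.Adj v x ∧ x ≠ v)) with hS
  have hmemS : ∀ t : (_ : V) × V × V, t ∈ S ↔
      (G.Adj v t.1 ∧ G.Adj v t.2.1 ∧ ¬G.Adj t.1 t.2.1 ∧ t.2.1 ≠ t.1 ∧
       G.Adj t.1 t.2.2 ∧ ¬G.Adj v t.2.2 ∧ t.2.2 ≠ v) := by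
    rintro ⟨a, b, c⟩
    simp only [hS, Finset.mem_sigma, Finset.mem_product, Finset.mem_filter, Finset.mem_univ,
      true_and, SimpleGraph.mem_neighborFinset]
    tauto
  have hsum : ∑ a ∈ G.neighborFinset v, n2c G v a * n2e G v a = S.card := by
    rw [hS, Finset.card_sigma]
    refine Finset.sum_congr rfl fun a _ => ?_
    rw [Finset.card_product]
    unfold n2c n2e
    congr 1 <;> · apply congrArg Finset.card; ext x; simp [Finset.mem_filter]
  have hF4 : (S.filter fun t => ¬ G.Adj t.2.1 t.2.2).card = F4' G v := by
    unfold F4' cnt3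
    refine Finset.card_bij (fun t _ => ({t.1, t.2.1, t.2.2} : Finset V)) ?_ ?_ ?_
    · rintro ⟨a, b, c⟩ ht
      rw [Finset.mem_filter] at ht
      obtain ⟨hts, hnbc⟩ := ht
      rw [hmemS] at hts
      obtain ⟨hva, hvb, hnab, hba, hac, hnvc, hcv⟩ := hts
      have hab' : a ≠ b := Ne.symm hba
      have hac' : a ≠ c := G.ne_of_adj hac
      have hbc' : b ≠ c := fun h => hnvc (h ▸ hvb)
      have hv_a : v ≠ a := G.ne_of_adj hva
      have hv_b : v ≠ b := G.ne_of_adj hvb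
      have hv_c : v ≠ c := Ne.symm hcv
      simp only [Finset.mem_filter, Finset.mem_powersetCard, Finset.subset_univ, true_and]
      refine ⟨?_, ?_, b, by simp, a, by simp, c, by simp,
        Finset.insert_comm a b {c}, hvb, hva, hac, fun h => hnab h.symm, hnvc, hnbc⟩
      · rw [Finset.card_insert_of_notMem (by simp [hab', hac']),
          Finset.card_insert_of_notMem (by simp [hbc']), Finset.card_singleton]
      · simp [hv_a, hv_b, hv_c]
    · rintro ⟨a1, b1, c1⟩ h1 ⟨a2, b2, c2⟩ h2 heq
      rw [Finset.mem_filter] at h1 h2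
      obtain ⟨h1S, hnbc1⟩ := h1
      obtain ⟨h2S, hnbc2⟩ := h2
      rw [hmemS] at h1S h2S
      obtain ⟨hva1, hvb1, hnab1, hba1, hac1, hnvc1, hcv1⟩ := h1S
      obtain ⟨hva2, hvb2, hnab2, hba2, hac2, hnvc2, hcv2⟩ := h2S
      simp only at heq hnbc1 hnbc2
      have hc : c2 = c1 := by
        have hm : c2 ∈ ({a1, b1, c1} : Finset V) := by rw [heq]; simp
        simp only [Finset.mem_insert, Finset.mem_singleton] at hm
        rcases hm with h | h | h
        · subst h; exact absurd hva1 hnvc2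
        · subst h; exact absurd hvb1 hnvc2
        · exact h
      have ha : a2 = a1 := by
        have hm : a2 ∈ ({a1, b1, c1} : Finset V) := by rw [heq]; simp
        simp only [Finset.mem_insert, Finset.mem_singleton] at hm
        rcases hm with h | h | h
        · exact h
        · subst h; rw [hc] at hac2; exact absurd hac2 hnbc1
        · subst h; exact absurd hva2 hnvc1
      have hb : b2 = b1 := by
        have hm : b2 ∈ ({a1, b1, c1} : Finset V) := by rw [heq]; simp
        simp only [Finset.mem_insert, Finset.mem_singleton] at hm
        rcases hm with h | h | h
        · exact absurd (h.trans ha.symm) hba2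
        · exact h
        · subst h; exact absurd hvb2 hnvc1
      rw [ha, hb, hc]
    · intro s hs
      simp only [Finset.mem_filter, Finset.mem_powersetCard, Finset.subset_univ, true_and] at hs
      obtain ⟨hcard, hvs, a, hma, b, hmb, c, hmc, hseq, hva, hvb, hbc, hnab, hnvc, hnac⟩ := hs
      subst hseq
      obtain ⟨hab', hac', hbc'⟩ := card3_distinct hcard
      refine ⟨⟨b, a, c⟩, ?_, Finset.insert_comm b a {c}⟩
      rw [Finset.mem_filter, hmemS]
      exact ⟨⟨hvb, hva, fun h => hnab h.symm, hab', hbc, hnvc,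
        fun h => hvs (h ▸ hmc)⟩, hnac⟩
  have hF7 : (S.filter fun t => G.Adj t.2.1 t.2.2).card = 2 * F7 G v := by
    have hmain : (S.filter fun t => G.Adj t.2.1 t.2.2).card =
        2 * (((Finset.univ : Finset V).powersetCard 3).filter
          (fun s => v ∉ s ∧ ∃ a ∈ s, ∃ b ∈ s, ∃ c ∈ s, s = {a, b, c} ∧
            (G.Adj v a ∧ G.Adj a b ∧ G.Adj b c ∧ G.Adj v c ∧ ¬G.Adj v b ∧
              ¬G.Adj a c))).card := by
      have hmap : ∀ t ∈ S.filter (fun t => G.Adj t.2.1 t.2.2),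
          ({t.1, t.2.1, t.2.2} : Finset V) ∈
            ((Finset.univ : Finset V).powersetCard 3).filter
              (fun s => v ∉ s ∧ ∃ a ∈ s, ∃ b ∈ s, ∃ c ∈ s, s = {a, b, c} ∧
                (G.Adj v a ∧ G.Adj a b ∧ G.Adj b c ∧ G.Adj v c ∧ ¬G.Adj v b ∧
                  ¬G.Adj a c)) := by
        rintro ⟨a, b, c⟩ ht
        rw [Finset.mem_filter] at ht
        obtain ⟨hts, hbc⟩ := ht
        rw [hmemS] at hts
        obtain ⟨hva, hvb, hnab, hba, hac, hnvc, hcv⟩ := hts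
        simp only at hbc
        have hab' : a ≠ b := Ne.symm hba
        have hac' : a ≠ c := G.ne_of_adj hac
        have hbc' : b ≠ c := fun h => hnvc (h ▸ hvb)
        have hv_a : v ≠ a := G.ne_of_adj hva
        have hv_b : v ≠ b := G.ne_of_adj hvb
        have hv_c : v ≠ c := Ne.symm hcv
        simp only [Finset.mem_filter, Finset.mem_powersetCard, Finset.subset_univ, true_and]
        refine ⟨?_, ?_, a, by simp, c, by simp, b, by simp, ?_,
          hva, hac, hbc.symm, hvb, hnvc, hnab⟩
        · rw [Finset.card_insert_of_notMem (by simp [hab', hac']),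
            Finset.card_insert_of_notMem (by simp [hbc']), Finset.card_singleton]
        · simp [hv_a, hv_b, hv_c]
        · exact congrArg (insert a) (Finset.pair_comm b c)
      rw [Finset.card_eq_sum_card_fiberwise hmap]
      rw [Finset.sum_congr rfl (fun s hs => ?_), Finset.sum_const, smul_eq_mul, mul_comm]
      -- each fiber has exactly two elements
      simp only [Finset.mem_filter, Finset.mem_powersetCard, Finset.subset_univ, true_and] at hs
      obtain ⟨hcard, hvs, a, hma, b, hmb, c, hmc, hseq, hva, hab, hbc, hvc, hnvb, hnac⟩ := hs
      subst hseq
      obtain ⟨hab', hac', hbc'⟩ := card3_distinct hcard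
      have hbv : b ≠ v := fun h => hvs (h ▸ hmb)
      have ht1 : (⟨a, c, b⟩ : (_ : V) × V × V) ∈ (S.filter fun t => G.Adj t.2.1 t.2.2).filter
          (fun t => ({t.1, t.2.1, t.2.2} : Finset V) = {a, b, c}) := by
        rw [Finset.mem_filter, Finset.mem_filter, hmemS]
        exact ⟨⟨⟨hva, hvc, hnac, hac'.symm, hab, hnvb, hbv⟩, hbc.symm⟩,
          congrArg (insert a) (Finset.pair_comm c b)⟩
      have ht2 : (⟨c, a, b⟩ : (_ : V) × V × V) ∈ (S.filter fun t => G.Adj t.2.1 t.2.2).filter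
          (fun t => ({t.1, t.2.1, t.2.2} : Finset V) = {a, b, c}) := by
        rw [Finset.mem_filter, Finset.mem_filter, hmemS]
        exact ⟨⟨⟨hvc, hva, fun h => hnac h.symm, hac', hbc.symm, hnvb, hbv⟩, hab⟩,
          (Finset.insert_comm c a {b}).trans (congrArg (insert a) (Finset.pair_comm c b))⟩
      have hfib : ((S.filter fun t => G.Adj t.2.1 t.2.2).filter
          (fun t => ({t.1, t.2.1, t.2.2} : Finset V) = {a, b, c})) =
          ({⟨a, c, b⟩, ⟨c, a, b⟩} : Finset ((_ : V) × V × V)) := by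
        apply Finset.Subset.antisymm
        · rintro ⟨a', b', c'⟩ hu
          rw [Finset.mem_filter, Finset.mem_filter, hmemS] at hu
          obtain ⟨⟨⟨hva', hvb', hnab', hba', hac'2, hnvc', hcv'⟩, hbc'adj⟩, hset⟩ := hu
          simp only at hset hbc'adj
          have hmA : a' ∈ ({a, b, c} : Finset V) := by rw [← hset]; simp
          have hmB : b' ∈ ({a, b, c} : Finset V) := by rw [← hset]; simp
          have hmC : c' ∈ ({a, b, c} : Finset V) := by rw [← hset]; simp
          simp only [Finset.mem_insert, Finset.mem_singleton] at hmA hmB hmC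
          have hc'b : c' = b := by
            rcases hmC with h | h | h
            · subst h; exact absurd hva hnvc'
            · exact h
            · subst h; exact absurd hvc hnvc'
          rw [Finset.mem_insert, Finset.mem_singleton]
          rcases hmA with h | h | h
          · left
            have hb'c : b' = c := by
              rcases hmB with h2 | h2 | h2
              · exact absurd (h2.trans h.symm) hba'
              · subst h2; exact absurd hvb' hnvb
              · exact h2
            subst h; subst hb'c; subst hc'b; rfl
          · subst h; exact absurd hva' hnvb
          · right
            have hb'a : b' = a := by
              rcases hmB with h2 | h2 | h2
              · exact h2
              · subst h2; exact absurd hvb' hnvb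
              · exact absurd (h2.trans h.symm) hba'
            subst h; subst hb'a; subst hc'b; rfl
        · intro u hu
          rw [Finset.mem_insert, Finset.mem_singleton] at hu
          rcases hu with rfl | rfl
          · exact ht1
          · exact ht2
      rw [hfib]
      rw [Finset.card_insert_of_notMem (by simp [hac']), Finset.card_singleton]
    rw [hmain]
    unfold F7 cnt3
    have : ∀ T T' : Finset (Finset V), T = T' → 2 * T.card = 2 * T'.card := by
      rintro T _ rfl; rfl
    apply this
    ext x
    simp only [Finset.mem_filter]
  rw [hsum, ← Finset.card_filter_add_card_filter_not
    (s := S) (p := fun t => G.Adj t.2.1 t.2.2), hF4, hF7, add_comm]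

end FourProfiles
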